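/- Let $\rho_0 > 0$, $0 < \varphi_0 < \pi/2$, $d = \pi/2 - \varphi_0$, $a_I = \rho_0 \cos(d/2 + \varphi_0)/\cos\varphi_0$, $b_I = \rho_0 \sin(d/2+\varphi_0)/\cos\varphi_0$, and $z(s) = a_I \cosh s - i b_I \sinh s$. Then for every $s \in \mathbb{R}$, the point $z(s)$ lies outside the closed sector $\Sigma(\rho_0, \varphi_0) = \{\rho_0 + r e^{i\theta} : r \ge 0, |\theta| \le \varphi_0\}$. -/
import Mathlib

open scoped Real

set_option maxHeartbeats 1000000 in
/-- The hyperbola integration contour `z(s) = a_I cosh s - i b_I sinh s`, with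
parameters determined by the spectral parameters `(ρ₀, φ₀)`, does not intersect
the closed spectral sector `Σ(ρ₀, φ₀)`. -/
theorem contour_outside_sector
    (ρ₀ φ₀ : ℝ) (hρ : 0 < ρ₀) (hφ0 : 0 < φ₀) (hφ1 : φ₀ < π / 2) :
    let d : ℝ := π / 2 - φ₀
    let aI : ℝ := ρ₀ * Real.cos (d / 2 + φ₀) / Real.cos φ₀
    let bI : ℝ := ρ₀ * Real.sin (d / 2 + φ₀) / Real.cos φ₀
    let z : ℝ → ℂ := fun s => (aI * Real.cosh s : ℝ) - Complex.I * (bI * Real.sinh s : ℝ)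
    ∀ s : ℝ, z s ∉ {w : ℂ | ∃ r θ : ℝ, 0 ≤ r ∧ |θ| ≤ φ₀ ∧
      w = (ρ₀ : ℂ) + (r : ℂ) * Complex.exp (θ * Complex.I)} := by
  intro d aI bI z s hmem
  obtain ⟨r, θ, hr, hθ, heq⟩ := hmem
  simp only [z, Complex.ext_iff, Complex.exp_mul_I, Complex.add_re, Complex.add_im,
    Complex.mul_re, Complex.mul_im, Complex.sub_re, Complex.sub_im, Complex.I_re,
    Complex.I_im, Complex.ofReal_re, Complex.ofReal_im, Complex.cos_ofReal_re,
    Complex.sin_ofReal_im, Complex.cos_ofReal_im, Complex.sin_ofReal_re] at heq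
  obtain ⟨hre, him⟩ := heq
  have hπ := Real.pi_pos
  have hcφ : 0 < Real.cos φ₀ := Real.cos_pos_of_mem_Ioo ⟨by linarith, hφ1⟩
  have hsφ : 0 < Real.sin φ₀ := Real.sin_pos_of_pos_of_lt_pi hφ0 (by linarith)
  set A := Real.cos (d / 2 + φ₀) with hAdef
  set B := Real.sin (d / 2 + φ₀) with hBdef
  set c := Real.cos φ₀ with hcdef
  set σ := Real.sin φ₀ with hσdef
  have hdval : d = π / 2 - φ₀ := rfl
  have hA : 0 < A := by
    rw [hAdef]
    exact Real.cos_pos_of_mem_Ioo ⟨by rw [hdval]; linarith, by rw [hdval]; linarith⟩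
  have hB : 0 < B := by
    rw [hBdef]
    exact Real.sin_pos_of_pos_of_lt_pi (by rw [hdval]; linarith) (by rw [hdval]; linarith)
  have hcalt : A < c := by
    rw [hAdef, hcdef]
    exact Real.cos_lt_cos_of_nonneg_of_le_pi hφ0.le (by rw [hdval]; linarith)
      (by rw [hdval]; linarith)
  have hAB : A * σ < B * c := by
    have hsd : 0 < Real.sin (d / 2) :=
      Real.sin_pos_of_pos_of_lt_pi (by rw [hdval]; linarith) (by rw [hdval]; linarith)
    have hsub : Real.sin (d / 2) = B * c - A * σ := by
      have h := Real.sin_sub (d / 2 + φ₀) φ₀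
      rw [add_sub_cancel_right] at h
      rw [h, hBdef, hcdef, hAdef, hσdef]
    linarith
  -- bounds on θ
  have hθ1 : -φ₀ ≤ θ := neg_le_of_abs_le hθ
  have hθ2 : θ ≤ φ₀ := le_of_abs_le hθ
  have hcosθ : c ≤ Real.cos θ := by
    rw [← Real.cos_abs θ, hcdef]
    exact Real.cos_le_cos_of_nonneg_of_le_pi (abs_nonneg θ) (by linarith) hθ
  have hsinθ : |Real.sin θ| ≤ σ := by
    have hmono := Real.strictMonoOn_sin.monotoneOn
    have m1 : θ ∈ Set.Icc (-(π/2)) (π/2) := ⟨by linarith, by linarith⟩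
    have m2 : φ₀ ∈ Set.Icc (-(π/2)) (π/2) := ⟨by linarith, by linarith⟩
    have m3 : -φ₀ ∈ Set.Icc (-(π/2)) (π/2) := ⟨by linarith, by linarith⟩
    have hs1 := hmono m3 m1 hθ1
    have hs2 := hmono m1 m2 hθ2
    rw [Real.sin_neg] at hs1
    exact abs_le.mpr ⟨by rw [hσdef]; linarith, by rw [hσdef]; linarith⟩
  -- clear denominators in the key equations
  have haIc : aI * c = ρ₀ * A := by
    show ρ₀ * A / c * c = ρ₀ * A
    field_simp
  have hbIc : bI * c = ρ₀ * B := by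
    show ρ₀ * B / c * c = ρ₀ * B
    field_simp
  have h1 : ρ₀ * A * Real.cosh s = ρ₀ * c + r * c * Real.cos θ := by
    linear_combination c * hre - Real.cosh s * haIc
  have h2 : ρ₀ * B * Real.sinh s = -(r * c * Real.sin θ) := by
    linear_combination (-c) * him - Real.sinh s * hbIc
  -- switch to t = |s|
  set t := |s| with htdef
  have hch : Real.cosh s = Real.cosh t := (Real.cosh_abs s).symm
  have hshabs : |Real.sinh s| = Real.sinh t := Real.abs_sinh s
  have hsh0 : 0 ≤ Real.sinh t := Real.sinh_nonneg_iff.mpr (abs_nonneg s)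
  have hexp : Real.cosh t - Real.sinh t ≤ 1 := by
    rw [Real.cosh_sub_sinh]
    exact Real.exp_le_one_iff.mpr (neg_nonpos.mpr (abs_nonneg s))
  have h2' : ρ₀ * B * Real.sinh t ≤ r * c * σ := by
    have habs : ρ₀ * B * Real.sinh t = |ρ₀ * B * Real.sinh s| := by
      rw [abs_mul, abs_of_pos (mul_pos hρ hB), hshabs]
    rw [habs, h2, abs_neg, abs_mul]
    calc |r * c| * |Real.sin θ| ≤ |r * c| * σ :=
          mul_le_mul_of_nonneg_left hsinθ (abs_nonneg _)
      _ = r * c * σ := by rw [abs_of_nonneg (mul_nonneg hr hcφ.le)]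
  rw [hch] at h1
  -- final contradiction
  have key : σ * (ρ₀ * A * Real.cosh t) - σ * (ρ₀ * c) ≥ c * (ρ₀ * B * Real.sinh t) := by
    have e1 : σ * (r * c * Real.cos θ) ≥ σ * (r * c * c) := by
      have := mul_le_mul_of_nonneg_left hcosθ (mul_nonneg hr hcφ.le)
      nlinarith
    have e2 : c * (r * c * σ) ≥ c * (ρ₀ * B * Real.sinh t) :=
      mul_le_mul_of_nonneg_left h2' hcφ.le
    have e0 : σ * (ρ₀ * A * Real.cosh t) - σ * (ρ₀ * c) = σ * (r * c * Real.cos θ) := by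
      linear_combination σ * h1
    have e3 : σ * (r * c * c) = c * (r * c * σ) := by ring
    linarith
  nlinarith [mul_le_mul_of_nonneg_left hAB.le (mul_nonneg hρ.le hsh0),
    mul_pos (mul_pos hρ hsφ) (sub_pos.mpr hcalt),
    mul_le_mul_of_nonneg_left hexp (mul_nonneg (mul_nonneg hρ.le hsφ.le) hA.le)]
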